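/- Let Ω ⊂ ℝ^N be a bounded convex domain, let u > 0 be a first Dirichlet eigenfunction with eigenvalue λ, and suppose Harnack's inequality holds in the form sup_{B_R(y)} u ≤ C₁^{√λ R + √N} inf_{B_R(y)} u whenever B_{4R}(y) ⊂ Ω, for a dimensional constant C₁ > 1. Let σ > 0 and Ω_σ := {x ∈ Ω : dist(x, ∂Ω) > σ}; assume a maximum point x̄ of u satisfies dist(x̄, ∂Ω) ≥ σ. Then for every x ∈ closure(Ω_σ), u(x) ≥ C₁^{-d(√λ/2 + 2√N/σ)} max_{closure Ω} u, where d is the diameter of Ω. -/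
import Mathlib

set_option maxHeartbeats 1000000


/-- Harnack-chain lower bound for a positive first Dirichlet eigenfunction `u` of a
bounded convex domain: if Harnack's inequality holds on balls and a maximum point `x̄`
of `u` is at distance at least `σ` from `∂Ω`, then
`u(x) ≥ C₁^{-d(√λ/2 + 2√N/σ)} max u` for all `x ∈ closure Ω_σ`. -/
theorem stmt14 {N : ℕ} (Ω : Set (EuclideanSpace ℝ (Fin N)))
    (hΩo : IsOpen Ω) (hΩc : Convex ℝ Ω) (hΩb : Bornology.IsBounded Ω)
    (u : EuclideanSpace ℝ (Fin N) → ℝ) (lam : ℝ) (hlam : 0 ≤ lam)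
    (hu : ContinuousOn u (closure Ω)) (hupos : ∀ x ∈ Ω, 0 < u x)
    (C₁ : ℝ) (hC₁ : 1 < C₁)
    (hHarnack : ∀ (y : EuclideanSpace ℝ (Fin N)) (R : ℝ), 0 < R →
      Metric.ball y (4 * R) ⊆ Ω →
      ∀ x₁ ∈ Metric.ball y R, ∀ x₂ ∈ Metric.ball y R,
        u x₁ ≤ C₁ ^ (Real.sqrt lam * R + Real.sqrt N) * u x₂)
    (σ : ℝ) (hσ : 0 < σ)
    (xbar : EuclideanSpace ℝ (Fin N)) (hxbar : xbar ∈ Ω)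
    (hmax : ∀ y ∈ closure Ω, u y ≤ u xbar)
    (hdist : σ ≤ Metric.infDist xbar (frontier Ω)) :
    ∀ x ∈ closure {y ∈ Ω | σ < Metric.infDist y (frontier Ω)},
      C₁ ^ (-(Metric.diam Ω * (Real.sqrt lam / 2 + 2 * Real.sqrt N / σ))) * u xbar
        ≤ u x := by
  intro x hx
  have hC₁0 : (0:ℝ) < C₁ := lt_trans one_pos hC₁
  have hd0 : (0:ℝ) ≤ Metric.diam Ω := Metric.diam_nonneg
  have hxσ : σ ≤ Metric.infDist x (frontier Ω) :=
    closure_minimal (fun y hy => le_of_lt hy.2)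
      (isClosed_le continuous_const (Metric.continuous_infDist_pt _)) hx
  have hxcl : x ∈ closure Ω := closure_mono (fun y hy => hy.1) hx
  have hxΩ : x ∈ Ω := by
    by_contra hxn
    have hxf : x ∈ frontier Ω := ⟨hxcl, by rwa [hΩo.interior_eq]⟩
    have h0 := Metric.infDist_zero_of_mem hxf
    rw [h0] at hxσ
    linarith
  have huxbar : 0 < u xbar := hupos xbar hxbar
  have hux : 0 < u x := hupos x hxΩ
  -- balls of radius σ around points with infDist ≥ σ are inside Ω
  have hball : ∀ y, y ∈ Ω → σ ≤ Metric.infDist y (frontier Ω) →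
      Metric.ball y σ ⊆ Ω := by
    intro y hy hyd
    have hsub : Metric.ball y σ ⊆ Ω ∪ (closure Ω)ᶜ := by
      intro z hz
      by_cases hzΩ : z ∈ Ω
      · exact Or.inl hzΩ
      · refine Or.inr fun hzc => ?_
        have hzf : z ∈ frontier Ω := ⟨hzc, by rwa [hΩo.interior_eq]⟩
        have h1 : Metric.infDist y (frontier Ω) ≤ dist y z :=
          Metric.infDist_le_dist_of_mem hzf
        rw [Metric.mem_ball, dist_comm] at hz
        linarith
    exact (convex_ball y σ).isPreconnected.subset_left_of_subset_union hΩo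
      isClosed_closure.isOpen_compl
      (disjoint_compl_right.mono_left subset_closure)
      hsub ⟨y, Metric.mem_ball_self hσ, hy⟩
  have hballx : Metric.ball x σ ⊆ Ω := hball x hxΩ hxσ
  have hballxbar : Metric.ball xbar σ ⊆ Ω := hball xbar hxbar hdist
  by_cases hxx : x = xbar
  · subst hxx
    have hAnn : (0:ℝ) ≤ Metric.diam Ω * (Real.sqrt lam / 2 + 2 * Real.sqrt N / σ) := by
      positivity
    have h1 : C₁ ^ (-(Metric.diam Ω * (Real.sqrt lam / 2 + 2 * Real.sqrt N / σ))) ≤ 1 :=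
      Real.rpow_le_one_of_one_le_of_nonpos hC₁.le (by linarith)
    exact mul_le_of_le_one_left hux.le h1
  -- main case : x ≠ xbar
  set v := xbar - x with hv
  set ℓ := dist x xbar with hℓ
  have hℓ0 : 0 < ℓ := dist_pos.2 hxx
  have hℓv : ‖v‖ = ℓ := by rw [hℓ, dist_eq_norm, hv, norm_sub_rev]
  -- segment balls
  have hseg : ∀ t : ℝ, 0 ≤ t → t ≤ 1 → Metric.ball (x + t • v) σ ⊆ Ω := by
    intro t ht0 ht1 z hz
    rw [Metric.mem_ball, dist_eq_norm] at hz
    have h1 : z - (x + t • v) + x ∈ Ω := by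
      apply hballx
      rw [Metric.mem_ball, dist_eq_norm]
      simpa using hz
    have h2 : z - (x + t • v) + xbar ∈ Ω := by
      apply hballxbar
      rw [Metric.mem_ball, dist_eq_norm]
      simpa using hz
    have hz' : z = (1 - t) • (z - (x + t • v) + x) + t • (z - (x + t • v) + xbar) := by
      rw [hv]; module
    rw [hz']
    exact hΩc h1 h2 (by linarith) ht0 (by ring)
  -- diameter bound : ℓ + σ ≤ diam Ω
  have hℓdiam : ℓ ≤ Metric.diam Ω := Metric.dist_le_diam_of_mem hΩb hxΩ hxbar
  have hℓd : ℓ + σ ≤ Metric.diam Ω := by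
    by_contra hcon
    push_neg at hcon
    set t := (σ + Metric.diam Ω - ℓ) / 2 with ht
    have ht0 : 0 < t := by rw [ht]; linarith
    have htσ : t < σ := by rw [ht]; linarith
    have hq : xbar + (t / ℓ) • v ∈ Ω := by
      apply hballxbar
      rw [Metric.mem_ball, dist_eq_norm]
      have h1 : xbar + (t / ℓ) • v - xbar = (t / ℓ) • v := by abel
      rw [h1, norm_smul, Real.norm_eq_abs, hℓv, abs_of_pos (by positivity)]
      rw [div_mul_cancel₀ _ hℓ0.ne']
      exact htσ
    have hdq : dist x (xbar + (t / ℓ) • v) = ℓ + t := by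
      rw [dist_eq_norm]
      have h1 : x - (xbar + (t / ℓ) • v) = -((1 + t / ℓ) • v) := by
        rw [hv]; module
      rw [h1, norm_neg, norm_smul, Real.norm_eq_abs, hℓv, abs_of_pos (by positivity)]
      field_simp
    have h2 := Metric.dist_le_diam_of_mem hΩb hxΩ hq
    rw [hdq] at h2
    linarith
  -- the number of steps
  set n : ℕ := ⌈2 * ℓ / σ⌉₊ + 1 with hn
  have hn0 : (0:ℝ) < (n:ℝ) := by
    rw [hn]; push_cast; positivity
  have hnl : 2 * ℓ / σ < (n:ℝ) := by
    have := Nat.le_ceil (2 * ℓ / σ)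
    rw [hn]; push_cast; linarith
  have hnu : (n:ℝ) ≤ 2 * Metric.diam Ω / σ := by
    have h1 : (⌈2 * ℓ / σ⌉₊ : ℝ) < 2 * ℓ / σ + 1 := Nat.ceil_lt_add_one (by positivity)
    have h2 : 2 * ℓ / σ + 2 ≤ 2 * Metric.diam Ω / σ := by
      rw [div_add' _ _ _ hσ.ne', div_le_div_iff₀ hσ hσ]
      nlinarith
    rw [hn]; push_cast; linarith
  -- the Harnack chain
  set E := Real.sqrt lam * (σ / 4) + Real.sqrt N with hE
  have hE0 : 0 ≤ E := by rw [hE]; positivity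
  have hCE0 : 0 < C₁ ^ E := Real.rpow_pos_of_pos hC₁0 E
  set p : ℕ → EuclideanSpace ℝ (Fin N) := fun i => x + ((i:ℝ) / n) • v with hp
  have hstep : ∀ i : ℕ, i < n → u (p (i + 1)) ≤ C₁ ^ E * u (p i) := by
    intro i hi
    set m := x + (((i:ℝ) + 2⁻¹) / n) • v with hm
    have hiR : (i:ℝ) + 1 ≤ (n:ℝ) := by exact_mod_cast hi
    have ht0 : 0 ≤ ((i:ℝ) + 2⁻¹) / n := by positivity
    have ht1 : ((i:ℝ) + 2⁻¹) / n ≤ 1 := by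
      rw [div_le_one hn0]; linarith
    have hmb : Metric.ball m (4 * (σ / 4)) ⊆ Ω := by
      have h44 : 4 * (σ / 4) = σ := by ring
      rw [h44, hm]
      exact hseg _ ht0 ht1
    have h2ℓ : 2 * ℓ < (n:ℝ) * σ := by
      rw [div_lt_iff₀ hσ] at hnl; linarith
    have hd1 : dist (p i) m < σ / 4 := by
      have h1 : p i - m = (-(2⁻¹ / (n:ℝ))) • v := by
        simp only [hp, hm]
        rw [add_sub_add_left_eq_sub, ← sub_smul]
        congr 1
        field_simp
        ring
      rw [dist_eq_norm, h1, norm_smul, Real.norm_eq_abs, hℓv, abs_neg,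
        abs_of_pos (by positivity)]
      rw [div_mul_eq_mul_div, div_lt_iff₀ hn0]
      linarith
    have hd2 : dist (p (i + 1)) m < σ / 4 := by
      have h1 : p (i + 1) - m = (2⁻¹ / (n:ℝ)) • v := by
        simp only [hp, hm]
        rw [add_sub_add_left_eq_sub, ← sub_smul]
        congr 1
        push_cast
        field_simp
        ring
      rw [dist_eq_norm, h1, norm_smul, Real.norm_eq_abs, hℓv,
        abs_of_pos (by positivity)]
      rw [div_mul_eq_mul_div, div_lt_iff₀ hn0]
      linarith
    exact hHarnack m (σ / 4) (by positivity) hmb (p (i + 1))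
      (Metric.mem_ball.2 hd2) (p i) (Metric.mem_ball.2 hd1)
  have hchain : ∀ i, i ≤ n → u (p i) ≤ (C₁ ^ E) ^ i * u x := by
    intro i
    induction i with
    | zero => intro _; simp [hp]
    | succ k ih =>
      intro hk
      have hk' : k < n := hk
      calc u (p (k + 1)) ≤ C₁ ^ E * u (p k) := hstep k hk'
        _ ≤ C₁ ^ E * ((C₁ ^ E) ^ k * u x) :=
            mul_le_mul_of_nonneg_left (ih (le_of_lt hk')) hCE0.le
        _ = (C₁ ^ E) ^ (k + 1) * u x := by ring
  have hpn : p n = xbar := by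
    show x + ((n:ℝ) / n) • v = xbar
    rw [div_self hn0.ne', one_smul, hv]
    abel
  have hfin : u xbar ≤ C₁ ^ (E * n) * u x := by
    calc u xbar = u (p n) := by rw [hpn]
      _ ≤ (C₁ ^ E) ^ n * u x := hchain n le_rfl
      _ = C₁ ^ (E * n) * u x := by
          rw [Real.rpow_mul hC₁0.le, Real.rpow_natCast]
  set A := Metric.diam Ω * (Real.sqrt lam / 2 + 2 * Real.sqrt N / σ) with hA
  have hEn : E * n ≤ A := by
    have h1 : E * n ≤ E * (2 * Metric.diam Ω / σ) :=
      mul_le_mul_of_nonneg_left hnu hE0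
    have h2 : E * (2 * Metric.diam Ω / σ) = A := by
      rw [hE, hA]; field_simp; ring
    exact h2 ▸ h1
  have h3 : C₁ ^ (E * n) ≤ C₁ ^ A := (Real.rpow_le_rpow_left_iff hC₁).2 hEn
  have h4 : u xbar ≤ C₁ ^ A * u x :=
    le_trans hfin (mul_le_mul_of_nonneg_right h3 hux.le)
  have h5 : 0 < C₁ ^ (-A) := Real.rpow_pos_of_pos hC₁0 _
  calc C₁ ^ (-A) * u xbar ≤ C₁ ^ (-A) * (C₁ ^ A * u x) :=
        mul_le_mul_of_nonneg_left h4 h5.le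
    _ = u x := by
        rw [← mul_assoc, ← Real.rpow_add hC₁0]
        simp
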